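/- Let p and q be primes satisfying conditions (1), and write the fundamental unit of Q(√(2pq)) as ε_2pq = x + y√(2pq) with positive integers x, y. Then 2p·(x - 1) is a perfect square, and there exist integers y₁, y₂ such that 2·ε_2pq = (y₁√(2p) + y₂√q)² in Q(√(2p), √q) and q·y₂² - 2p·y₁² = 2. -/

import Mathlib

/-!
The norm of `ε = x + y√(2pq)` is `±1`, and `-1` is excluded because `-1` is not a square
mod `q`. Hence `x = 2k + 1`, `y = 2m` and `k (k + 1) = 2pq m²`; as `k` and `k + 1` are coprime,
`k = d₁ a²` and `k + 1 = d₂ b²` with `d₁ d₂ = 2pq`. Reducing `d₁ a² + 1 = d₂ b²` modulo `p` or `q`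
and using the Legendre symbols of conditions (1) rules out six of the eight splittings.
The splitting `(2pq, 1)` makes `ε` the square of the unit `b + a√(2pq)`, impossible for a
fundamental unit; what remains is `(p, 2q)`, i.e. `x - 1 = 2pa²`, `x + 1 = 4qb²`, `y = 2ab`.
-/

noncomputable section

open IntermediateField

/-- Conditions (1): `p` and `q` are odd primes with `p ≡ 1 (mod 4)`, `q ≡ 3 (mod 4)`,
`(2/p) = -1`, `(2/q) = 1` and `(p/q) = -1`. -/
def Cond1 (p q : ℕ) : Prop :=
  p.Prime ∧ q.Prime ∧ p % 4 = 1 ∧ q % 4 = 3 ∧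
    jacobiSym 2 p = -1 ∧ jacobiSym 2 q = 1 ∧ jacobiSym (p : ℤ) q = -1

/-- `x` is a unit of the ring of integers of the subfield `K` of `ℝ`. -/
def IsUnitOfIntegers (K : IntermediateField ℚ ℝ) (x : ℝ) : Prop :=
  x ∈ K ∧ IsIntegral ℤ x ∧ IsIntegral ℤ x⁻¹

/-- `ε` is the fundamental unit of `ℚ(√d)`: it is a unit of the ring of integers,
it is `> 1`, and every unit is `±ε^n` for some `n : ℤ`. -/
def IsFundUnit (d : ℕ) (ε : ℝ) : Prop :=
  1 < ε ∧ IsUnitOfIntegers (adjoin ℚ {Real.sqrt d}) ε ∧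
    ∀ x : ℝ, IsUnitOfIntegers (adjoin ℚ {Real.sqrt d}) x →
      ∃ n : ℤ, x = ε ^ n ∨ x = -ε ^ n

theorem isSquare_of_mul_sq_eq_one {R : Type*} [CommMonoid R] {u b : R} (h : u * b ^ 2 = 1) :
    IsSquare u :=
  ⟨u * b, calc u = u * (u * b ^ 2) := by rw [h, mul_one]
    _ = u * b * (u * b) := by rw [sq]; ac_rfl⟩

theorem isSquare_natCast_of_mul_sq_add_one_eq {r d₁ d₂ a b : ℕ}
    (h : d₁ * a ^ 2 + 1 = d₂ * b ^ 2) (hr : r ∣ d₁) : IsSquare (d₂ : ZMod r) := by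
  refine isSquare_of_mul_sq_eq_one (b := (b : ZMod r)) ?_
  have := congrArg (Nat.cast : ℕ → ZMod r) h
  push_cast at this
  rwa [(ZMod.natCast_eq_zero_iff d₁ r).mpr hr, zero_mul, zero_add, eq_comm] at this

theorem isSquare_neg_natCast_of_mul_sq_add_one_eq {r d₁ d₂ a b : ℕ}
    (h : d₁ * a ^ 2 + 1 = d₂ * b ^ 2) (hr : r ∣ d₂) : IsSquare (-(d₁ : ZMod r)) := by
  refine isSquare_of_mul_sq_eq_one (b := (a : ZMod r)) ?_
  have := congrArg (Nat.cast : ℕ → ZMod r) h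
  push_cast at this
  rw [(ZMod.natCast_eq_zero_iff d₂ r).mpr hr, zero_mul] at this
  linear_combination -this

theorem not_isSquare_neg_of_isSquare_neg_one {R : Type*} [CommRing R] {u : R}
    (h : IsSquare (-1 : R)) (hu : ¬IsSquare u) : ¬IsSquare (-u) :=
  fun hneg ↦ hu (by simpa using h.mul hneg)

theorem Nat.not_isSquare_of_mod_four_eq_two {n : ℕ} (h : n % 4 = 2) : ¬IsSquare n := by
  rintro ⟨t, rfl⟩
  have := Nat.mul_mod t t 4
  have : t % 4 < 4 := Nat.mod_lt _ (by norm_num)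
  interval_cases t % 4 <;> omega

theorem Nat.exists_eq_mul_sq_of_mul_succ_eq {k n m : ℕ} (hn : 0 < n)
    (h : k * (k + 1) = n * m ^ 2) :
    ∃ d₁ d₂ a b, d₁ * d₂ = n ∧ k = d₁ * a ^ 2 ∧ k + 1 = d₂ * b ^ 2 ∧ m = a * b := by
  have hcop : k.Coprime (k + 1) := Nat.coprime_self_add_right.mpr (Nat.coprime_one_right k)
  have hgcd : n.gcd k * n.gcd (k + 1) = n := by
    rw [← Nat.Coprime.gcd_mul n hcop, h, Nat.gcd_mul_right_right]
  obtain ⟨u, hu⟩ := Nat.gcd_dvd_right n k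
  obtain ⟨v, hv⟩ := Nat.gcd_dvd_right n (k + 1)
  have huv : u * v = m ^ 2 := by
    refine Nat.eq_of_mul_eq_mul_left hn ?_
    calc n * (u * v) = n.gcd k * n.gcd (k + 1) * (u * v) := by rw [hgcd]
      _ = (n.gcd k * u) * (n.gcd (k + 1) * v) := by ring
      _ = n * m ^ 2 := by rw [← hu, ← hv, h]
  have hcop' : u.Coprime v :=
    (hcop.coprime_dvd_left (Dvd.intro_left _ hu.symm)).coprime_dvd_right (Dvd.intro_left _ hv.symm)
  obtain ⟨a, rfl⟩ := exists_eq_pow_of_mul_eq_pow (Nat.isUnit_iff.mpr hcop') huv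
  obtain ⟨b, rfl⟩ :=
    exists_eq_pow_of_mul_eq_pow (Nat.isUnit_iff.mpr hcop'.symm) ((mul_comm _ _).trans huv)
  refine ⟨_, _, a, b, hgcd, hu, hv, (Nat.pow_left_injective two_ne_zero) ?_⟩
  simp only [← huv, mul_pow]

theorem Nat.Prime.exists_of_mul_eq_mul {r d₁ d₂ n : ℕ} (hr : r.Prime) (h : d₁ * d₂ = r * n) :
    ∃ e₁ e₂, e₁ * e₂ = n ∧ (d₁ = r * e₁ ∧ d₂ = e₂ ∨ d₁ = e₁ ∧ d₂ = r * e₂) := by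
  rcases (hr.dvd_mul.mp (Dvd.intro n h.symm)) with ⟨e₁, rfl⟩ | ⟨e₂, rfl⟩
  · exact ⟨e₁, d₂, Nat.eq_of_mul_eq_mul_left hr.pos (by rw [← h]; ring), Or.inl ⟨rfl, rfl⟩⟩
  · exact ⟨d₁, e₂, Nat.eq_of_mul_eq_mul_left hr.pos (by rw [← h]; ring), Or.inr ⟨rfl, rfl⟩⟩

theorem Nat.exists_of_sq_eq_two_mul_sq_add_one {n x y : ℕ} (hn : Odd n)
    (h : x ^ 2 = 2 * n * y ^ 2 + 1) :
    ∃ k m, x = 2 * k + 1 ∧ y = 2 * m ∧ k * (k + 1) = 2 * n * m ^ 2 := by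
  obtain ⟨k, rfl⟩ : Odd x := by
    have : Odd (x ^ 2) := h ▸ ⟨n * y ^ 2, by ring⟩
    exact (Nat.odd_pow_iff two_ne_zero).mp this
  have hk : 2 * (k * (k + 1)) = n * y ^ 2 := by nlinarith
  obtain ⟨m, rfl⟩ : Even y := by
    have : Even (n * y ^ 2) := hk ▸ even_two_mul _
    exact (Nat.even_pow.mp ((Nat.even_mul.mp this).resolve_left (Nat.not_even_iff_odd.mpr hn))).1
  exact ⟨k, m, rfl, (two_mul m).symm, by nlinarith⟩

open Polynomial in
theorem isUnit_of_mul_sq_add_mul_add_one_eq_zero {R S : Type*} [CommRing R] [IsDomain R]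
    [IsIntegrallyClosed R] [CommRing S] [IsDomain S] [Algebra R S] [Module.IsTorsionFree R S]
    {s : S} (hs : IsIntegral R s) (hrange : s ∉ (algebraMap R S).range) {a b : R}
    (h : algebraMap R S a * s ^ 2 + algebraMap R S b * s + 1 = 0) : IsUnit a := by
  -- `minpoly R s` has degree 2 and divides `a X² + b X + 1`, so the quotient is a constant `c`
  -- with `c * (minpoly R s).coeff 0 = 1`, while comparing leading coefficients gives `a = c`.
  have hPs : aeval s (C a * X ^ 2 + C b * X + C 1) = 0 := by
    simp only [map_add, map_mul, aeval_C, aeval_X_pow, aeval_X, map_one]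
    exact h
  obtain ⟨g, hg⟩ := minpoly.isIntegrallyClosed_dvd hs hPs
  have hcoeff (n : ℕ) := congrArg (coeff · n) hg
  have hg0 : g ≠ 0 := by rintro rfl; simpa using hcoeff 0
  have hdeg := natDegree_mul (minpoly.ne_zero hs) hg0 ▸ hg ▸ natDegree_quadratic_le (a := a)
  have hmin := (minpoly.two_le_natDegree_iff hs).mpr hrange
  obtain ⟨c, rfl⟩ : ∃ c, g = C c := ⟨_, eq_C_of_natDegree_eq_zero (by omega)⟩
  have h0 : 1 = (minpoly R s).coeff 0 * c := by simpa using hcoeff 0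
  have h2 : a = c := by
    have hlead := (minpoly.monic hs).coeff_natDegree
    rw [show (minpoly R s).natDegree = 2 by omega] at hlead
    simpa [hlead, coeff_one] using hcoeff 2
  exact h2 ▸ IsUnit.of_mul_eq_one_right _ h0.symm

theorem sq_sub_mul_sq_eq_one_or_neg_one {d : ℕ} (hd : Irrational √d) {x y : ℤ} (hy : y ≠ 0)
    (hint : IsIntegral ℤ (x + y * √d)⁻¹) :
    x ^ 2 - d * y ^ 2 = 1 ∨ x ^ 2 - d * y ^ 2 = -1 := by
  have hirr : Irrational (x + y * √d)⁻¹ := ((hd.intCast_mul hy).intCast_add x).inv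
  refine Int.isUnit_iff.mp (isUnit_of_mul_sq_add_mul_add_one_eq_zero hint
    (fun ⟨n, hn⟩ ↦ hirr ⟨n, by simpa using hn⟩) (b := -2 * x) ?_)
  have hne : (x + y * √d : ℝ) ≠ 0 := fun h0 ↦ hirr.ne_zero (by rw [h0, inv_zero])
  have hsq : √(d : ℝ) ^ 2 = d := Real.sq_sqrt d.cast_nonneg
  simp only [algebraMap_int_eq, eq_intCast]
  push_cast
  field_simp
  linear_combination (y : ℝ) ^ 2 * hsq

theorem isIntegral_sqrt_natCast (d : ℕ) : IsIntegral ℤ √(d : ℝ) :=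
  IsIntegral.of_pow two_pos (by rw [Real.sq_sqrt d.cast_nonneg]; exact isIntegral_natCast d)

theorem isUnitOfIntegers_add_mul_sqrt {d : ℕ} {a b : ℤ} (h : a ^ 2 - d * b ^ 2 = 1) :
    IsUnitOfIntegers (adjoin ℚ {√(d : ℝ)}) (a + b * √d) := by
  have hsqrt : √(d : ℝ) ∈ adjoin ℚ {√(d : ℝ)} := mem_adjoin_simple_self ℚ _
  have hinv : (a + b * √d : ℝ)⁻¹ = a + (-b : ℤ) * √d := by
    refine inv_eq_of_mul_eq_one_right ?_
    have hR : (a : ℝ) ^ 2 - d * b ^ 2 = 1 := by exact_mod_cast h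
    push_cast
    linear_combination hR - (b : ℝ) ^ 2 * Real.sq_sqrt d.cast_nonneg
  refine ⟨add_mem (intCast_mem _ a) (mul_mem (intCast_mem _ b) hsqrt), ?_, ?_⟩
  · exact (isIntegral_intCast a).add ((isIntegral_intCast b).mul (isIntegral_sqrt_natCast d))
  · rw [hinv]
    exact (isIntegral_intCast a).add ((isIntegral_intCast (-b)).mul (isIntegral_sqrt_natCast d))

theorem IsFundUnit.sq_ne {d : ℕ} {ε η : ℝ} (hε : IsFundUnit d ε)
    (hη : IsUnitOfIntegers (adjoin ℚ {√(d : ℝ)}) η) : η ^ 2 ≠ ε := by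
  obtain ⟨n, rfl | rfl⟩ := hε.2.2 η hη <;> intro h <;>
  · have h2n : ε ^ (2 * n) = ε ^ (1 : ℤ) := by rw [zpow_one, mul_comm, zpow_mul]; simpa using h
    have := zpow_right_injective₀ (by linarith [hε.1]) hε.1.ne' h2n
    omega

namespace Cond1

variable {p q : ℕ} (h : Cond1 p q)
include h

theorem odd_right : Odd q :=
  Nat.odd_iff.mpr (by have := h.2.2.2.1; omega)

theorem odd_mul : Odd (p * q) :=
  (Nat.odd_iff.mpr (by have := h.2.2.1; omega)).mul h.odd_right

theorem not_isSquare_two_zmod_p : ¬IsSquare (2 : ZMod p) := by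
  obtain ⟨hp, -, -, -, h2p, -, -⟩ := h
  have : Fact p.Prime := ⟨hp⟩
  have := (legendreSym.eq_neg_one_iff p (a := 2)).mp
    (by rwa [jacobiSym.legendreSym.to_jacobiSym])
  simpa using this

theorem not_isSquare_p_zmod_q : ¬IsSquare (p : ZMod q) := by
  obtain ⟨-, hq, -, -, -, -, hpq⟩ := h
  have : Fact q.Prime := ⟨hq⟩
  have := (legendreSym.eq_neg_one_iff q (a := p)).mp
    (by rwa [jacobiSym.legendreSym.to_jacobiSym])
  simpa using this

theorem not_isSquare_q_zmod_p : ¬IsSquare (q : ZMod p) := by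
  have hq := h.odd_right
  obtain ⟨hp, -, hp4, -, -, -, hpq⟩ := h
  have : Fact p.Prime := ⟨hp⟩
  have := (legendreSym.eq_neg_one_iff p (a := q)).mp (by
    rwa [jacobiSym.legendreSym.to_jacobiSym, jacobiSym.quadratic_reciprocity_one_mod_four' hq hp4])
  simpa using this

theorem isSquare_neg_one_zmod_p : IsSquare (-1 : ZMod p) := by
  obtain ⟨hp, -, hp4, -⟩ := h
  have : Fact p.Prime := ⟨hp⟩
  exact ZMod.exists_sq_eq_neg_one_iff.mpr (by omega)

theorem not_isSquare_neg_one_zmod_q : ¬IsSquare (-1 : ZMod q) := by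
  obtain ⟨-, hq, -, hq4, -⟩ := h
  have : Fact q.Prime := ⟨hq⟩
  exact ZMod.exists_sq_eq_neg_one_iff.not.mpr (by omega)

theorem eq_sq_of_mul_succ_eq {k m : ℕ} (hkm : k * (k + 1) = 2 * p * q * m ^ 2) :
    (∃ a b, k = 2 * p * q * a ^ 2 ∧ k + 1 = b ^ 2 ∧ m = a * b) ∨
      ∃ a b, k = p * a ^ 2 ∧ k + 1 = 2 * q * b ^ 2 ∧ m = a * b := by
  have hp := h.1
  have hq := h.2.1
  obtain ⟨d₁, d₂, a, b, hd, rfl, hk, rfl⟩ :=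
    Nat.exists_eq_mul_sq_of_mul_succ_eq (by positivity [hp.pos, hq.pos]) hkm
  obtain ⟨e₁, e₂, he, ⟨rfl, rfl⟩ | ⟨rfl, rfl⟩⟩ :=
    Nat.prime_two.exists_of_mul_eq_mul (hd.trans (mul_assoc 2 p q))
  all_goals
    obtain ⟨f₁, f₂, hf, ⟨rfl, rfl⟩ | ⟨rfl, rfl⟩⟩ := hp.exists_of_mul_eq_mul he
  all_goals
    obtain ⟨g₁, g₂, hg, ⟨rfl, rfl⟩ | ⟨rfl, rfl⟩⟩ :=
      hq.exists_of_mul_eq_mul (hf.trans (mul_one q).symm)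
  all_goals
    obtain ⟨rfl, rfl⟩ := mul_eq_one.mp hg
    simp only [mul_one, one_mul, ← mul_assoc] at hk ⊢
  -- the splittings `(d₁, d₂)`, in order: `(2pq, 1)`, `(2p, q)`, `(2q, p)`, `(2, pq)`, `(pq, 2)`,
  -- `(p, 2q)`, `(q, 2p)`, `(1, 2pq)`
  · exact Or.inl ⟨a, b, rfl, hk, rfl⟩
  · exact (h.not_isSquare_q_zmod_p (isSquare_natCast_of_mul_sq_add_one_eq hk
      (dvd_mul_left p 2))).elim
  · exact (h.not_isSquare_p_zmod_q (isSquare_natCast_of_mul_sq_add_one_eq hk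
      (dvd_mul_left q 2))).elim
  · refine (not_isSquare_neg_of_isSquare_neg_one h.isSquare_neg_one_zmod_p
      h.not_isSquare_two_zmod_p ?_).elim
    simpa using isSquare_neg_natCast_of_mul_sq_add_one_eq hk (dvd_mul_right p q)
  · refine (h.not_isSquare_two_zmod_p ?_).elim
    simpa using isSquare_natCast_of_mul_sq_add_one_eq hk (dvd_mul_right p q)
  · exact Or.inr ⟨a, b, rfl, hk, rfl⟩
  · exact (not_isSquare_neg_of_isSquare_neg_one h.isSquare_neg_one_zmod_p
      h.not_isSquare_q_zmod_p (isSquare_neg_natCast_of_mul_sq_add_one_eq hk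
      (dvd_mul_left p 2))).elim
  · refine (h.not_isSquare_neg_one_zmod_q ?_).elim
    simpa using isSquare_neg_natCast_of_mul_sq_add_one_eq (d₁ := 1) (by simpa using hk)
      (dvd_mul_left q (2 * p))

theorem two_mul_mul_mod_four : 2 * p * q % 4 = 2 := by
  simp [Nat.mul_mod, h.2.2.1, h.2.2.2.1]

theorem sq_sub_mul_sq_eq_one {ε : ℝ} (hε : IsFundUnit (2 * p * q) ε) {x y : ℤ} (hy : y ≠ 0)
    (heq : ε = x + y * √(2 * p * q)) : x ^ 2 - 2 * p * q * y ^ 2 = 1 := by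
  have hirr : Irrational √((2 * p * q : ℕ) : ℝ) :=
    irrational_sqrt_natCast_iff.mpr (Nat.not_isSquare_of_mod_four_eq_two h.two_mul_mul_mod_four)
  have hint := hε.2.1.2.2
  rw [heq, show (2 * p * q : ℝ) = (2 * p * q : ℕ) by push_cast; ring] at hint
  rcases sq_sub_mul_sq_eq_one_or_neg_one hirr hy hint with h1 | h1
  · exact_mod_cast h1
  · refine (h.not_isSquare_neg_one_zmod_q (isSquare_of_mul_sq_eq_one (b := (x : ZMod q)) ?_)).elim
    have := congrArg (Int.cast : ℤ → ZMod q) h1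
    push_cast at this
    simp only [ZMod.natCast_self, mul_zero, zero_mul, sub_zero] at this
    linear_combination -this

end Cond1

theorem statement13 (p q : ℕ) (h : Cond1 p q) (ε2pq : ℝ)
    (hε2pq : IsFundUnit (2 * p * q) ε2pq) (x y : ℤ) (hx : 0 < x) (hy : 0 < y)
    (heq : ε2pq = (x : ℝ) + (y : ℝ) * Real.sqrt (2 * p * q)) :
    (∃ s : ℤ, 2 * (p : ℤ) * (x - 1) = s ^ 2) ∧
    ∃ y₁ y₂ : ℤ, 2 * ε2pq = ((y₁ : ℝ) * Real.sqrt (2 * p) + (y₂ : ℝ) * Real.sqrt q) ^ 2 ∧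
      (q : ℤ) * y₂ ^ 2 - 2 * (p : ℤ) * y₁ ^ 2 = 2 := by
  have hpell := h.sq_sub_mul_sq_eq_one hε2pq hy.ne' heq
  lift x to ℕ using hx.le
  lift y to ℕ using hy.le
  obtain ⟨k, m, rfl, rfl, hkm⟩ := Nat.exists_of_sq_eq_two_mul_sq_add_one (x := x) (y := y)
    h.odd_mul (by rw [← mul_assoc]; zify; linarith)
  rcases h.eq_sq_of_mul_succ_eq (by rw [hkm, mul_assoc 2 p q]) with
    ⟨a, b, rfl, hb, rfl⟩ | ⟨a, b, rfl, hb, rfl⟩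
  · have hbZ : (2 * p * q * a ^ 2 + 1 : ℤ) = b ^ 2 := by exact_mod_cast hb
    have hbR : (2 * p * q * a ^ 2 + 1 : ℝ) = b ^ 2 := by exact_mod_cast hb
    have hsqrt : √(2 * p * q : ℝ) ^ 2 = 2 * p * q := Real.sq_sqrt (by positivity)
    refine absurd ?_ (hε2pq.sq_ne (isUnitOfIntegers_add_mul_sqrt (a := b) (b := a) ?_))
    · rw [heq]
      push_cast
      linear_combination (a : ℝ) ^ 2 * hsqrt - hbR
    · push_cast
      linear_combination -hbZ
  · have hbZ : (p * a ^ 2 + 1 : ℤ) = 2 * q * b ^ 2 := by exact_mod_cast hb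
    have hbR : (p * a ^ 2 + 1 : ℝ) = 2 * q * b ^ 2 := by exact_mod_cast hb
    have hsqrt_2p : √(2 * p : ℝ) ^ 2 = 2 * p := Real.sq_sqrt (by positivity)
    have hsqrt_q : √(q : ℝ) ^ 2 = q := Real.sq_sqrt (by positivity)
    have hsqrt_mul : √(2 * p : ℝ) * √q = √(2 * p * q) := (Real.sqrt_mul (by positivity) q).symm
    refine ⟨⟨2 * p * a, by push_cast; ring⟩, a, 2 * b, ?_, by linear_combination -2 * hbZ⟩
    rw [heq]
    push_cast
    linear_combination
      2 * hbR - (a : ℝ) ^ 2 * hsqrt_2p - 4 * (b : ℝ) ^ 2 * hsqrt_q - 4 * (a * b : ℝ) * hsqrt_mul
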